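/- Let $\gamma' \geq 0$ be a real number and let $i \geq 1$ be an integer. Define $L_{i0} = 1$ and, for $1 \le j \le i$, $L_{ij} = \binom{i}{j} \frac{\prod_{k=0}^{j-1}(i+\gamma'-k)}{\prod_{k=1}^{j}(k+\gamma')}$, and set $R_{ij} = \sum_{k=0}^{j} L_{ik}$ and $R_i = R_{ii}$. Then for every integer $0 \le r \le i-1$, $\dfrac{R_{ir}\,(R_i - R_{ir})}{(i-r)(i-r+\gamma')\,L_{ir}} \le \dfrac{2(i+2)}{i\,(i+2\gamma')}\,R_i$. -/

import Mathlib

/-!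
The ratio `L_{i,j+1} / L_{ij} = (i-j)(i-j+γ') / ((j+1)(j+1+γ'))` shows that `j ↦ L_{ij}` is
unimodal with its peak at `j ≈ i/2`. If `r` lies left of the peak, `R_{ir} ≤ (r+1) L_{ir}` and
`R_i - R_{ir} ≤ R_i`; if it lies right of it, `R_{ir} ≤ R_i` and
`R_i - R_{ir} ≤ (i-r) L_{i,r+1}`. In both cases the quotient is at most `a / (b(b+γ')) ⬝ R_i`
with `a ≤ b` and `a + b = i + 1`, and such a ratio is at most `2(i+2) / (i(i+2γ'))`.
-/

open Finset

/-- The regularizing coefficients `L_{ij}` (even-dimension case):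
`L_{i0} = 1` and for `j ≥ 1`,
`L_{ij} = binom(i,j) ⬝ (∏_{k=0}^{j-1} (i+γ'-k)) / (∏_{k=1}^{j} (k+γ'))`.
(For `j = 0` both products are empty, yielding `1`.) -/
noncomputable def Lcoef (γ : ℝ) (i j : ℕ) : ℝ :=
  (i.choose j : ℝ) * (∏ k ∈ Finset.range j, ((i : ℝ) + γ - (k : ℝ))) /
    ∏ k ∈ Finset.Icc 1 j, ((k : ℝ) + γ)

/-- The partial sums `R_{ij} = ∑_{k=0}^{j} L_{ik}`. -/
noncomputable def Rcoef (γ : ℝ) (i j : ℕ) : ℝ :=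
  ∑ k ∈ Finset.range (j + 1), Lcoef γ i k

noncomputable def Fquot (γ : ℝ) (i r : ℕ) : ℝ :=
  Rcoef γ i r * (Rcoef γ i i - Rcoef γ i r) / ((i - r) * (i - r + γ) * Lcoef γ i r)

theorem div_mul_add_le_of_add_eq {a b n g : ℝ} (hn : 0 < n) (hg : 0 ≤ g) (hab : a ≤ b)
    (hsum : a + b = n + 1) : a / (b * (b + g)) ≤ 2 * (n + 2) / (n * (n + 2 * g)) := by
  have hb : n + 1 ≤ 2 * b := by linarith
  rw [div_le_div_iff₀ (by nlinarith) (by positivity)]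
  calc a * (n * (n + 2 * g)) ≤ (n + 1) / 2 * ((n + 2) * (n + 1 + 2 * g)) :=
        mul_le_mul (by linarith) (by nlinarith) (by positivity) (by positivity)
    _ = (n + 2) / 2 * ((n + 1) * (n + 1 + 2 * g)) := by ring
    _ ≤ (n + 2) / 2 * (2 * b * (2 * (b + g))) := by gcongr <;> linarith
    _ = 2 * (n + 2) * (b * (b + g)) := by ring

section
variable {γ : ℝ} {i : ℕ}

theorem prod_Icc_add_pos (hγ : 0 ≤ γ) (j : ℕ) : 0 < ∏ k ∈ Icc 1 j, ((k : ℝ) + γ) :=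
  prod_pos fun k hk => by have := (mem_Icc.mp hk).1; positivity

theorem Lcoef_pos (hγ : 0 ≤ γ) {j : ℕ} (hj : j ≤ i) : 0 < Lcoef γ i j := by
  refine div_pos (mul_pos (mod_cast Nat.choose_pos hj) (prod_pos fun k hk => ?_))
    (prod_Icc_add_pos hγ j)
  have : (k : ℝ) < i := mod_cast (mem_range.mp hk).trans_le hj
  linarith

theorem Lcoef_nonneg (hγ : 0 ≤ γ) (i j : ℕ) : 0 ≤ Lcoef γ i j := by
  rcases le_or_gt j i with hj | hj
  · exact (Lcoef_pos hγ hj).le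
  · simp [Lcoef, Nat.choose_eq_zero_of_lt hj]

theorem Lcoef_succ (hγ : 0 ≤ γ) {j : ℕ} (hj : j < i) :
    Lcoef γ i (j + 1) =
      Lcoef γ i j * (((i - j) * (i - j + γ)) / ((j + 1) * (j + 1 + γ))) := by
  have hchoose : (i.choose (j + 1) : ℝ) * (j + 1) = i.choose j * (i - j) := by
    have := congrArg (Nat.cast (R := ℝ)) (Nat.choose_succ_right_eq i j)
    push_cast [Nat.cast_sub hj.le] at this
    exact this
  have hq := prod_Icc_add_pos hγ j
  unfold Lcoef
  rw [prod_range_succ, prod_Icc_succ_top (Nat.le_add_left 1 j)]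
  push_cast
  field_simp
  linear_combination (∏ k ∈ range j, ((i : ℝ) + γ - k)) * (i + γ - j) * hchoose

theorem Lcoef_monotoneOn (hγ : 0 ≤ γ) : MonotoneOn (Lcoef γ i) (Set.Iic ((i + 1) / 2)) := by
  refine monotoneOn_of_le_succ Set.ordConnected_Iic fun j _ _ hj => ?_
  rw [Set.mem_Iic, Order.succ_eq_add_one] at hj
  have h2j : (2 * j + 1 : ℝ) ≤ i := mod_cast (by omega : 2 * j + 1 ≤ i)
  rw [Order.succ_eq_add_one, Lcoef_succ hγ (by omega)]
  refine le_mul_of_one_le_right (Lcoef_nonneg hγ i j) ((one_le_div (by positivity)).2 ?_)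
  exact mul_le_mul (by linarith) (by linarith) (by positivity) (by linarith)

theorem Lcoef_antitoneOn (hγ : 0 ≤ γ) : AntitoneOn (Lcoef γ i) (Set.Icc (i / 2) i) := by
  refine antitoneOn_of_succ_le Set.ordConnected_Icc fun j _ hj hj' => ?_
  rw [Set.mem_Icc] at hj
  rw [Set.mem_Icc, Order.succ_eq_add_one] at hj'
  have hij : (i : ℝ) ≤ 2 * j + 1 := mod_cast (by omega : i ≤ 2 * j + 1)
  have hji : (j : ℝ) + 1 ≤ i := mod_cast hj'.2
  rw [Order.succ_eq_add_one, Lcoef_succ hγ (by omega)]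
  refine mul_le_of_le_one_right (Lcoef_nonneg hγ i j) ((div_le_one (by positivity)).2 ?_)
  exact mul_le_mul (by linarith) (by linarith) (by linarith) (by positivity)

theorem Rcoef_nonneg (hγ : 0 ≤ γ) (i j : ℕ) : 0 ≤ Rcoef γ i j :=
  sum_nonneg fun k _ => Lcoef_nonneg hγ i k

theorem Rcoef_mono (hγ : 0 ≤ γ) (i : ℕ) : Monotone (Rcoef γ i) := fun _ _ h =>
  sum_le_sum_of_subset_of_nonneg (range_subset_range.2 (by omega))
    fun k _ _ => Lcoef_nonneg hγ i k

theorem Rcoef_le_mul_Lcoef (hγ : 0 ≤ γ) {r : ℕ} (hr : r ≤ (i + 1) / 2) :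
    Rcoef γ i r ≤ (r + 1) * Lcoef γ i r := by
  have := sum_le_card_nsmul (range (r + 1)) (Lcoef γ i) (Lcoef γ i r) fun k hk => by
    have hk : k ≤ r := Nat.lt_succ_iff.1 (mem_range.1 hk)
    exact Lcoef_monotoneOn hγ (Set.mem_Iic.2 (hk.trans hr)) (Set.mem_Iic.2 hr) hk
  simpa [Rcoef] using this

theorem Rcoef_sub_Rcoef_le (hγ : 0 ≤ γ) {r : ℕ} (hr : r < i) (h : i / 2 ≤ r + 1) :
    Rcoef γ i i - Rcoef γ i r ≤ (i - r) * Lcoef γ i (r + 1) := by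
  have hsum : Rcoef γ i i - Rcoef γ i r = ∑ k ∈ Ico (r + 1) (i + 1), Lcoef γ i k :=
    (sum_Ico_eq_sub _ (by omega)).symm
  have := sum_le_card_nsmul (Ico (r + 1) (i + 1)) (Lcoef γ i) (Lcoef γ i (r + 1)) fun k hk => by
    obtain ⟨hrk, hki⟩ := mem_Ico.1 hk
    exact Lcoef_antitoneOn hγ ⟨h, by omega⟩ ⟨by omega, by omega⟩ hrk
  rw [hsum]
  simpa [Nat.cast_sub hr.le] using this

theorem Fquot_le_of_two_mul_add_one_le (hγ : 0 ≤ γ) {r : ℕ} (h : 2 * r + 1 ≤ i) :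
    Fquot γ i r ≤ (r + 1) / ((i - r) * (i - r + γ)) * Rcoef γ i i := by
  have hr : r < i := by omega
  have hir : (0 : ℝ) < i - r := sub_pos.2 (mod_cast hr)
  have hL := Lcoef_pos hγ hr.le
  rw [Fquot, div_le_iff₀ (by positivity [add_pos_of_pos_of_nonneg hir hγ])]
  calc Rcoef γ i r * (Rcoef γ i i - Rcoef γ i r) ≤ (r + 1) * Lcoef γ i r * Rcoef γ i i :=
        mul_le_mul (Rcoef_le_mul_Lcoef hγ (by omega)) (sub_le_self _ (Rcoef_nonneg hγ i r))
          (sub_nonneg.2 (Rcoef_mono hγ i hr.le)) (by positivity)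
    _ = _ := by field_simp

theorem Fquot_le_of_le_two_mul_add_one (hγ : 0 ≤ γ) {r : ℕ} (hr : r < i) (h : i ≤ 2 * r + 1) :
    Fquot γ i r ≤ (i - r) / ((r + 1) * (r + 1 + γ)) * Rcoef γ i i := by
  have hir : (0 : ℝ) < i - r := sub_pos.2 (mod_cast hr)
  have hL := Lcoef_pos hγ hr.le
  rw [Fquot, div_le_iff₀ (by positivity [add_pos_of_pos_of_nonneg hir hγ])]
  calc Rcoef γ i r * (Rcoef γ i i - Rcoef γ i r)
      ≤ Rcoef γ i i * ((i - r) * Lcoef γ i (r + 1)) :=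
        mul_le_mul (Rcoef_mono hγ i hr.le) (Rcoef_sub_Rcoef_le hγ hr (by omega))
          (sub_nonneg.2 (Rcoef_mono hγ i hr.le)) (Rcoef_nonneg hγ i i)
    _ = _ := by rw [Lcoef_succ hγ hr]; field_simp

end

theorem Fquot_le_bound (γ : ℝ) (hγ : 0 ≤ γ) (i : ℕ) (hi : 1 ≤ i) :
    ∀ r : ℕ, r ≤ i - 1 →
      Rcoef γ i r * (Rcoef γ i i - Rcoef γ i r) /
          (((i : ℝ) - (r : ℝ)) * ((i : ℝ) - (r : ℝ) + γ) * Lcoef γ i r) ≤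
        2 * ((i : ℝ) + 2) / ((i : ℝ) * ((i : ℝ) + 2 * γ)) * Rcoef γ i i := by
  intro r hr
  have hri : r < i := by omega
  have hi' : (0 : ℝ) < i := mod_cast hi
  change Fquot γ i r ≤ _
  rcases le_total (2 * r + 1) i with h | h
  · have h' : (2 * r + 1 : ℝ) ≤ i := mod_cast h
    refine (Fquot_le_of_two_mul_add_one_le hγ h).trans
      (mul_le_mul_of_nonneg_right ?_ (Rcoef_nonneg hγ i i))
    exact div_mul_add_le_of_add_eq hi' hγ (by linarith) (by ring)
  · have h' : (i : ℝ) ≤ 2 * r + 1 := mod_cast h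
    refine (Fquot_le_of_le_two_mul_add_one hγ hri h).trans
      (mul_le_mul_of_nonneg_right ?_ (Rcoef_nonneg hγ i i))
    exact div_mul_add_le_of_add_eq hi' hγ (by linarith) (by ring)
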